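/- arXiv:1912.10544 — 4 statements merged into one kernel-verified Lean document; each statement's English description precedes it below -/
import Mathlib

section
/- Concordance is an equivalence relation: for a sheaf of sets F on the site of smooth manifolds, define two sections σ₀, σ₁ ∈ F(M) to be concordant if there exists σ ∈ F(M × ℝ) whose restrictions along M × {0} → M × ℝ and M × {1} → M × ℝ equal σ₀ and σ₁ respectively. Then concordance is an equivalence relation on F(M). -/
open Set
open scoped Manifold

/-- The fragment of a sheaf of sets on the site of smooth manifolds that is relevant to
concordance over a fixed manifold `M`: a presheaf of sets on the open subsets of the manifolds
`M × ℝ^a` (`a ∈ ℕ`) with contravariant functorial action along smooth maps, which satisfies the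
sheaf gluing condition with respect to open covers.  Morphisms `U → V` (for `U ⊆ M × ℝ^a` and
`V ⊆ M × ℝ^b`) are represented by ambient functions that are smooth on `U` and map `U` into `V`;
`map_congr` records that the induced map on sections only depends on the restriction to `U`. -/
structure SmoothSetSheaf
    {E : Type} [NormedAddCommGroup E] [NormedSpace ℝ E]
    {H : Type} [TopologicalSpace H] (I : ModelWithCorners ℝ E H)
    (M : Type) [TopologicalSpace M] [ChartedSpace H M] : Type 1 where
  sec : ∀ a : ℕ, Set (M × (Fin a → ℝ)) → Type
  map : ∀ {a b : ℕ} {U : Set (M × (Fin a → ℝ))} {V : Set (M × (Fin b → ℝ))}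
      (f : M × (Fin a → ℝ) → M × (Fin b → ℝ)),
      ContMDiffOn (I.prod 𝓘(ℝ, Fin a → ℝ)) (I.prod 𝓘(ℝ, Fin b → ℝ)) (⊤ : ℕ∞) f U →
      MapsTo f U V → sec b V → sec a U
  map_id : ∀ {a : ℕ} {U : Set (M × (Fin a → ℝ))} (h1) (h2) (σ : sec a U),
      map id h1 h2 σ = σ
  map_comp : ∀ {a b c : ℕ} {U : Set (M × (Fin a → ℝ))} {V : Set (M × (Fin b → ℝ))}
      {W : Set (M × (Fin c → ℝ))}
      (f : M × (Fin a → ℝ) → M × (Fin b → ℝ)) (hf1) (hf2 : MapsTo f U V)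
      (g : M × (Fin b → ℝ) → M × (Fin c → ℝ)) (hg1) (hg2 : MapsTo g V W)
      (hgf1) (hgf2 : MapsTo (g ∘ f) U W) (σ : sec c W),
      map f hf1 hf2 (map g hg1 hg2 σ) = map (g ∘ f) hgf1 hgf2 σ
  map_congr : ∀ {a b : ℕ} {U : Set (M × (Fin a → ℝ))} {V : Set (M × (Fin b → ℝ))}
      (f g : M × (Fin a → ℝ) → M × (Fin b → ℝ))
      (hf1 : ContMDiffOn (I.prod 𝓘(ℝ, Fin a → ℝ)) (I.prod 𝓘(ℝ, Fin b → ℝ)) (⊤ : ℕ∞) f U)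
      (hf2 : MapsTo f U V)
      (hg1 : ContMDiffOn (I.prod 𝓘(ℝ, Fin a → ℝ)) (I.prod 𝓘(ℝ, Fin b → ℝ)) (⊤ : ℕ∞) g U)
      (hg2 : MapsTo g U V)
      (h : ∀ x ∈ U, f x = g x) (σ : sec b V),
      map f hf1 hf2 σ = map g hg1 hg2 σ
  glue : ∀ {a : ℕ} {U : Set (M × (Fin a → ℝ))} (_ : IsOpen U) {ι : Type}
      (Us : ι → Set (M × (Fin a → ℝ))) (_ : ∀ i, IsOpen (Us i)) (hsub : ∀ i, Us i ⊆ U)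
      (_ : U ⊆ ⋃ i, Us i) (s : ∀ i, sec a (Us i)),
      (∀ i j, map id contMDiffOn_id (fun _ hx => hx.1 : MapsTo id (Us i ∩ Us j) (Us i)) (s i) =
        map id contMDiffOn_id (fun _ hx => hx.2 : MapsTo id (Us i ∩ Us j) (Us j)) (s j)) →
      ∃! t : sec a U,
        ∀ i, map id contMDiffOn_id (fun _ hx => hsub i hx : MapsTo id (Us i) U) t = s i

namespace SmoothSetSheaf

variable {E : Type} [NormedAddCommGroup E] [NormedSpace ℝ E]
  {H : Type} [TopologicalSpace H] {I : ModelWithCorners ℝ E H}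
  {M : Type} [TopologicalSpace M] [ChartedSpace H M]

/-- The inclusion `i_k : M ≅ M × {k} ↪ M × ℝ` (with `M = M × ℝ^0` and `M × ℝ = M × ℝ^1`). -/
def slice (k : ℝ) : M × (Fin 0 → ℝ) → M × (Fin 1 → ℝ) :=
  fun p => (p.1, fun _ => k)

theorem slice_smooth (k : ℝ) :
    ContMDiffOn (I.prod 𝓘(ℝ, Fin 0 → ℝ)) (I.prod 𝓘(ℝ, Fin 1 → ℝ)) (⊤ : ℕ∞) (slice (M := M) k)
      univ :=
  ((contMDiff_fst.prodMk contMDiff_const).contMDiffOn)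

/-- Two sections `σ₀, σ₁ ∈ F(M)` are concordant if there is a section over `M × ℝ` restricting
to `σ₀` along `M × {0}` and to `σ₁` along `M × {1}`. -/
def Concordant (F : SmoothSetSheaf I M) (σ₀ σ₁ : F.sec 0 univ) : Prop :=
  ∃ σ : F.sec 1 univ,
    F.map (slice 0) (slice_smooth 0) (mapsTo_univ _ _) σ = σ₀ ∧
    F.map (slice 1) (slice_smooth 1) (mapsTo_univ _ _) σ = σ₁

open scoped ContDiff

variable (F : SmoothSetSheaf I M)

theorem map_map_of_eqOn {a b c : ℕ} {U : Set (M × (Fin a → ℝ))} {V : Set (M × (Fin b → ℝ))}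
    {W : Set (M × (Fin c → ℝ))} {f : M × (Fin a → ℝ) → M × (Fin b → ℝ)}
    {g : M × (Fin b → ℝ) → M × (Fin c → ℝ)} {k : M × (Fin a → ℝ) → M × (Fin c → ℝ)}
    (hf : ContMDiffOn (I.prod 𝓘(ℝ, Fin a → ℝ)) (I.prod 𝓘(ℝ, Fin b → ℝ)) (⊤ : ℕ∞) f U)
    (hfUV : MapsTo f U V)
    (hg : ContMDiffOn (I.prod 𝓘(ℝ, Fin b → ℝ)) (I.prod 𝓘(ℝ, Fin c → ℝ)) (⊤ : ℕ∞) g V)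
    (hgVW : MapsTo g V W)
    (hk : ContMDiffOn (I.prod 𝓘(ℝ, Fin a → ℝ)) (I.prod 𝓘(ℝ, Fin c → ℝ)) (⊤ : ℕ∞) k U)
    (hkUW : MapsTo k U W) (hgf : ∀ x ∈ U, g (f x) = k x) (σ : F.sec c W) :
    F.map f hf hfUV (F.map g hg hgVW σ) = F.map k hk hkUW σ := by
  rw [F.map_comp f hf hfUV g hg hgVW (hg.comp hf hfUV) (hgVW.comp hfUV)]
  exact F.map_congr _ _ _ _ _ _ hgf σ

theorem exists_glue_pair {a : ℕ} {W U V : Set (M × (Fin a → ℝ))} (hW : IsOpen W)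
    (hU : IsOpen U) (hV : IsOpen V) (hUW : U ⊆ W) (hVW : V ⊆ W) (hcover : W ⊆ U ∪ V)
    (s : F.sec a U) (t : F.sec a V)
    (hst : F.map id contMDiffOn_id (fun _ hx => hx.1 : MapsTo id (U ∩ V) U) s =
      F.map id contMDiffOn_id (fun _ hx => hx.2 : MapsTo id (U ∩ V) V) t) :
    ∃ u : F.sec a W, F.map id contMDiffOn_id (fun _ hx => hUW hx : MapsTo id U W) u = s ∧
      F.map id contMDiffOn_id (fun _ hx => hVW hx : MapsTo id V W) u = t := by
  have hswap : MapsTo id (V ∩ U) (U ∩ V) := fun _ hx => ⟨hx.2, hx.1⟩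
  have hts : F.map id contMDiffOn_id (fun _ hx => hx.1 : MapsTo id (V ∩ U) V) t =
      F.map id contMDiffOn_id (fun _ hx => hx.2 : MapsTo id (V ∩ U) U) s :=
    (F.map_map_of_eqOn contMDiffOn_id hswap contMDiffOn_id (fun _ hx => hx.2) contMDiffOn_id
        (fun _ hx => hx.1) (fun _ _ => rfl) t).symm.trans <|
      (congrArg _ hst.symm).trans <|
        F.map_map_of_eqOn contMDiffOn_id hswap contMDiffOn_id (fun _ hx => hx.1) contMDiffOn_id
          (fun _ hx => hx.2) (fun _ _ => rfl) s
  have hcover' : W ⊆ ⋃ i, cond i U V := fun _ hx => by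
    rcases hcover hx with hxU | hxV
    exacts [mem_iUnion.2 ⟨true, hxU⟩, mem_iUnion.2 ⟨false, hxV⟩]
  obtain ⟨u, hu, -⟩ := F.glue hW (fun i => cond i U V) (fun i => by cases i <;> assumption)
    (fun i => by cases i <;> assumption) hcover'
    (Bool.rec (motive := fun i => F.sec a (cond i U V)) t s)
    (by rintro (_ | _) (_ | _) <;> first | rfl | exact hts | exact hst)
  exact ⟨u, hu true, hu false⟩

def proj : M × (Fin 1 → ℝ) → M × (Fin 0 → ℝ) :=
  fun p => (p.1, fun i => i.elim0)

theorem proj_contMDiff :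
    ContMDiff (I.prod 𝓘(ℝ, Fin 1 → ℝ)) (I.prod 𝓘(ℝ, Fin 0 → ℝ)) (⊤ : ℕ∞) (proj (M := M)) :=
  contMDiff_fst.prodMk contMDiff_const

theorem map_slice_map_proj {U : Set (M × (Fin 1 → ℝ))} (k : ℝ) (hk : MapsTo (slice k) univ U)
    (σ : F.sec 0 univ) :
    F.map (slice k) (slice_smooth k) hk
      (F.map proj proj_contMDiff.contMDiffOn (mapsTo_univ _ _) σ) = σ := by
  rw [F.map_map_of_eqOn (slice_smooth k) hk proj_contMDiff.contMDiffOn (mapsTo_univ _ _)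
    contMDiffOn_id (mapsTo_univ _ _) (fun x _ => Prod.ext rfl (funext fun i => i.elim0)),
    F.map_id]

def reparam (h : ℝ → ℝ) : M × (Fin 1 → ℝ) → M × (Fin 1 → ℝ) :=
  fun p => (p.1, fun _ => h (p.2 0))

theorem reparam_contMDiff {h : ℝ → ℝ} (hh : ContDiff ℝ ∞ h) :
    ContMDiff (I.prod 𝓘(ℝ, Fin 1 → ℝ)) (I.prod 𝓘(ℝ, Fin 1 → ℝ)) (⊤ : ℕ∞) (reparam (M := M) h) := by
  have hcoord : ContDiff ℝ ∞ (fun v : Fin 1 → ℝ => v 0) := contDiff_apply ℝ ℝ 0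
  have hconst : ContDiff ℝ ∞ (fun t : ℝ => fun _ : Fin 1 => t) := contDiff_pi.2 fun _ => contDiff_id
  exact contMDiff_fst.prodMk ((hconst.comp (hh.comp hcoord)).contMDiff.comp contMDiff_snd)

theorem map_slice_map_reparam {U : Set (M × (Fin 1 → ℝ))} {h : ℝ → ℝ} (hh : ContDiff ℝ ∞ h)
    {k k' : ℝ} (hk' : h k = k') (hk : MapsTo (slice k) univ U) (σ : F.sec 1 univ) :
    F.map (slice k) (slice_smooth k) hk
        (F.map (reparam h) (reparam_contMDiff hh).contMDiffOn (mapsTo_univ _ _) σ) =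
      F.map (slice k') (slice_smooth k') (mapsTo_univ _ _) σ :=
  F.map_map_of_eqOn _ _ _ _ _ _ (fun _ _ => by simp [reparam, slice, hk']) σ

theorem map_id_map_reparam_of_const {U W : Set (M × (Fin 1 → ℝ))} {h : ℝ → ℝ}
    (hh : ContDiff ℝ ∞ h) {k : ℝ} (hWU : W ⊆ U) (hconst : ∀ p ∈ W, h (p.2 0) = k)
    (σ : F.sec 1 univ) :
    F.map id contMDiffOn_id (fun _ hx => hWU hx : MapsTo id W U)
        (F.map (reparam h) (reparam_contMDiff hh).contMDiffOn (mapsTo_univ _ _) σ) =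
      F.map proj proj_contMDiff.contMDiffOn (mapsTo_univ _ _)
        (F.map (slice k) (slice_smooth k) (mapsTo_univ _ _) σ) :=
  (F.map_map_of_eqOn _ _ _ _ ((slice_smooth k).comp proj_contMDiff.contMDiffOn (mapsTo_univ _ _))
    (mapsTo_univ _ _) (fun p hp => by simp [reparam, slice, proj, hconst p hp]) σ).trans
    (F.map_comp _ _ _ _ _ _ _ _ σ).symm

variable {F}

theorem Concordant.refl (σ : F.sec 0 univ) : F.Concordant σ σ :=
  ⟨F.map proj proj_contMDiff.contMDiffOn (mapsTo_univ _ _) σ, F.map_slice_map_proj 0 _ σ,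
    F.map_slice_map_proj 1 _ σ⟩

theorem Concordant.symm {σ₀ σ₁ : F.sec 0 univ} : F.Concordant σ₀ σ₁ → F.Concordant σ₁ σ₀ := by
  rintro ⟨σ, hσ₀, hσ₁⟩
  have hflip : ContDiff ℝ ∞ fun t : ℝ => 1 - t := contDiff_const.sub contDiff_id
  refine ⟨F.map (reparam fun t => 1 - t) (reparam_contMDiff hflip).contMDiffOn (mapsTo_univ _ _) σ,
    ?_, ?_⟩
  · rw [F.map_slice_map_reparam hflip (sub_zero 1), hσ₁]
  · rw [F.map_slice_map_reparam hflip (sub_self 1), hσ₀]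

/-- `σ ∘ reparam φ` on `U` and `τ ∘ reparam ψ` on `V` glue, since on the overlap both are the
constant concordance at `σ₁`. -/
theorem Concordant.trans_of_glue {U V : Set (M × (Fin 1 → ℝ))} (hU : IsOpen U) (hV : IsOpen V)
    (hcover : univ ⊆ U ∪ V) (h0 : MapsTo (slice 0) univ U) (h1 : MapsTo (slice 1) univ V)
    {φ ψ : ℝ → ℝ} (hφ : ContDiff ℝ ∞ φ) (hψ : ContDiff ℝ ∞ ψ) (hφ0 : φ 0 = 0) (hψ1 : ψ 1 = 1)
    (hφ1 : ∀ p ∈ U ∩ V, φ (p.2 0) = 1) (hψ0 : ∀ p ∈ U ∩ V, ψ (p.2 0) = 0)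
    {σ₀ σ₁ σ₂ : F.sec 0 univ} (h₀₁ : F.Concordant σ₀ σ₁) (h₁₂ : F.Concordant σ₁ σ₂) :
    F.Concordant σ₀ σ₂ := by
  obtain ⟨σ, hσ₀, hσ₁⟩ := h₀₁
  obtain ⟨τ, hτ₁, hτ₂⟩ := h₁₂
  have hcompat : F.map id contMDiffOn_id (fun _ hp => hp.1 : MapsTo id (U ∩ V) U)
        (F.map (reparam φ) (reparam_contMDiff hφ).contMDiffOn (mapsTo_univ _ _) σ) =
      F.map id contMDiffOn_id (fun _ hp => hp.2 : MapsTo id (U ∩ V) V)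
        (F.map (reparam ψ) (reparam_contMDiff hψ).contMDiffOn (mapsTo_univ _ _) τ) := by
    rw [F.map_id_map_reparam_of_const hφ inter_subset_left hφ1,
      F.map_id_map_reparam_of_const hψ inter_subset_right hψ0, hσ₁, hτ₁]
  obtain ⟨u, huU, huV⟩ := F.exists_glue_pair isOpen_univ hU hV (subset_univ U) (subset_univ V)
    hcover _ _ hcompat
  refine ⟨u, ?_, ?_⟩
  · rw [← F.map_map_of_eqOn (slice_smooth 0) h0 contMDiffOn_id (mapsTo_univ _ _)
      (slice_smooth 0) _ (fun _ _ => rfl), huU, F.map_slice_map_reparam hφ hφ0, hσ₀]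
  · rw [← F.map_map_of_eqOn (slice_smooth 1) h1 contMDiffOn_id (mapsTo_univ _ _)
      (slice_smooth 1) _ (fun _ _ => rfl), huV, F.map_slice_map_reparam hψ hψ1, hτ₂]

theorem Concordant.trans {σ₀ σ₁ σ₂ : F.sec 0 univ} :
    F.Concordant σ₀ σ₁ → F.Concordant σ₁ σ₂ → F.Concordant σ₀ σ₂ := by
  have htime : Continuous fun p : M × (Fin 1 → ℝ) => p.2 0 :=
    (continuous_apply 0).comp continuous_snd
  refine Concordant.trans_of_glue (U := {p | p.2 0 < 2 / 3}) (V := {p | 1 / 3 < p.2 0})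
    (isOpen_lt htime continuous_const) (isOpen_lt continuous_const htime) ?_
    (fun _ _ => show (0 : ℝ) < 2 / 3 by norm_num) (fun _ _ => show (1 : ℝ) / 3 < 1 by norm_num)
    (φ := fun t => Real.smoothTransition (3 * t)) (ψ := fun t => Real.smoothTransition (3 * t - 2))
    (Real.smoothTransition.contDiff.comp (contDiff_const.mul contDiff_id))
    (Real.smoothTransition.contDiff.comp ((contDiff_const.mul contDiff_id).sub contDiff_const))
    (by simp) (by norm_num) ?_ ?_
  · intro p _
    by_cases hp : p.2 0 < 2 / 3
    · exact Or.inl hp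
    · exact Or.inr (show 1 / 3 < p.2 0 by linarith)
  · rintro p ⟨-, hp⟩
    exact Real.smoothTransition.one_of_one_le (by have : 1 / 3 < p.2 0 := hp; linarith)
  · rintro p ⟨hp, -⟩
    exact Real.smoothTransition.zero_of_nonpos (by have : p.2 0 < 2 / 3 := hp; linarith)

/-- For a sheaf of sets `F` on the site of smooth manifolds, concordance is an equivalence
relation on `F(M)`. -/
theorem concordant_equivalence (F : SmoothSetSheaf I M) :
    Equivalence (Concordant F) :=
  ⟨Concordant.refl, Concordant.symm, Concordant.trans⟩

end SmoothSetSheaf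
end

section
/- Let A^n ⊂ ℝ^{n+1} be the affine hyperplane of points whose coordinates sum to 1 (the smooth extended n-simplex), and Δ^n ⊂ A^n the subset with all coordinates nonnegative. Fix a smooth function c : ℝ → ℝ with c ≡ 0 near (-∞, 0], c ≡ 1 near [1, ∞). Define λ : A^n × [0,1] → A^n in coordinates by λ((x₀,…,x_n), t) = (y₀/C_t, …, y_n/C_t), where yᵢ = t·c(xᵢ) + (1-t)·xᵢ and C_t = Σᵢ yᵢ. Then λ is well-defined (C_t > 0 on a suitable domain containing Δ^n × [0,1]) wherever C_t > 0, λ(·, 0) is the identity, λ(x, t) ∈ Δ^n whenever x ∈ Δ^n, and λ(·, 1) maps a neighborhood of Δ^n in A^n into Δ^n. -/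
open Set Finset

/-- The explicit homotopy retraction `λ` of the extended simplex `A^n` onto the closed simplex
`Δ^n`:  with `yᵢ = t·c(xᵢ) + (1-t)·xᵢ`, `C_t = Σ yᵢ` and `λ(x,t) = y/C_t`, one has `C_t > 0`
on `Δ^n × [0,1]`, `λ(·,0) = id`, `λ` preserves `Δ^n`, and `λ(·,1)` maps a neighborhood of `Δ^n`
in `A^n` into `Δ^n`. -/
theorem simplex_retraction_lambda (n : ℕ) (c : ℝ → ℝ) (hc : ContDiff ℝ (⊤ : ℕ∞) c)
    (hc0 : ∀ t : ℝ, t ≤ 0 → c t = 0) (hc1 : ∀ t : ℝ, 1 ≤ t → c t = 1)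
    (hcnn : ∀ t : ℝ, 0 ≤ c t) (hc01 : ∀ t : ℝ, c t ≤ 1)
    (hcpos : ∀ t : ℝ, 0 < t → 0 < c t) :
    let A : Set (Fin (n+1) → ℝ) := {x | ∑ i, x i = 1}
    let Δ : Set (Fin (n+1) → ℝ) := {x | x ∈ A ∧ ∀ i, 0 ≤ x i}
    let y : (Fin (n+1) → ℝ) → ℝ → Fin (n+1) → ℝ :=
      fun x t i => t * c (x i) + (1 - t) * x i
    let C : (Fin (n+1) → ℝ) → ℝ → ℝ := fun x t => ∑ i, y x t i
    let lam : (Fin (n+1) → ℝ) → ℝ → Fin (n+1) → ℝ := fun x t i => y x t i / C x t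
    (∀ x ∈ Δ, ∀ t ∈ Icc (0:ℝ) 1, 0 < C x t) ∧
    (∀ x ∈ A, lam x 0 = x) ∧
    (∀ x ∈ Δ, ∀ t ∈ Icc (0:ℝ) 1, lam x t ∈ Δ) ∧
    (∃ W : Set (Fin (n+1) → ℝ), IsOpen W ∧ Δ ⊆ W ∧
      ∀ x ∈ W ∩ A, 0 < C x 1 ∧ lam x 1 ∈ Δ) := by
  intro A Δ y C lam
  have hCsum : ∀ x t, C x t = t * (∑ i, c (x i)) + (1 - t) * (∑ i, x i) := by
    intro x t
    simp only [C, y, Finset.sum_add_distrib, Finset.mul_sum]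
  have hSpos : ∀ x ∈ A, 0 < ∑ i, c (x i) := by
    intro x hx
    have hx' : ∑ i, x i = 1 := hx
    have hex : ∃ i, 0 < x i := by
      by_contra h
      push_neg at h
      have : ∑ i, x i ≤ 0 := Finset.sum_nonpos fun i _ => h i
      linarith
    obtain ⟨i, hi⟩ := hex
    exact Finset.sum_pos' (fun j _ => hcnn _) ⟨i, Finset.mem_univ i, hcpos _ hi⟩
  have hCpos : ∀ x ∈ A, ∀ t ∈ Icc (0:ℝ) 1, 0 < C x t := by
    rintro x hx t ⟨ht0, ht1⟩
    have hx' : ∑ i, x i = 1 := hx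
    have hS := hSpos x hx
    rw [hCsum, hx', mul_one]
    rcases eq_or_lt_of_le ht0 with h | h
    · simp [← h]
    · nlinarith [mul_pos h hS]
  have hlamSum : ∀ x, ∀ t, C x t ≠ 0 → ∑ i, lam x t i = 1 := by
    intro x t hC
    simp only [lam]
    rw [← Finset.sum_div]
    exact div_self hC
  refine ⟨fun x hx => hCpos x hx.1, ?_, ?_, ?_⟩
  · intro x hx
    have hx' : ∑ i, x i = 1 := hx
    funext i
    simp only [lam, y, C]
    simp only [zero_mul, sub_zero, one_mul, zero_add]
    rw [hx', div_one]
  · rintro x ⟨hxA, hxnn⟩ t ht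
    have hC := hCpos x hxA t ht
    constructor
    · exact hlamSum x t hC.ne'
    · intro i
      obtain ⟨ht0, ht1⟩ := ht
      have hy : 0 ≤ y x t i := by
        have := hcnn (x i)
        have := hxnn i
        simp only [y]
        nlinarith
      exact div_nonneg hy hC.le
  · refine ⟨Set.univ, isOpen_univ, Set.subset_univ _, ?_⟩
    rintro x ⟨-, hxA⟩
    have hC := hCpos x hxA 1 ⟨zero_le_one, le_refl 1⟩
    refine ⟨hC, hlamSum x 1 hC.ne', ?_⟩
    intro i
    have hy : 0 ≤ y x 1 i := by
      simp only [y, sub_self, zero_mul, add_zero, one_mul]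
      exact hcnn _
    exact div_nonneg hy hC.le
end

section
/- The functor d! : sSet → ssSet (simplicial sets to bisimplicial sets) left adjoint to the diagonal, determined by d!(Δ^n) = Δ^n ⊗ Δ[n], admits a natural transformation d! → δ to the functor δ(K)_m = K (the constant-in-one-direction functor with δ(Δ^n) = Δ[n]), and for every simplicial set X the map d!(X) → δ(X) is a degreewise weak homotopy equivalence of simplicial spaces. -/
open CategoryTheory Simplicial CategoryTheory.Limits

noncomputable section

/-- Simplicial spaces: simplicial objects in simplicial sets (i.e. bisimplicial sets with a
preferred direction). -/
abbrev SimplicialSpace : Type 1 := SimplexCategoryᵒᵖ ⥤ SSet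

/-- The diagonal functor from simplicial spaces to simplicial sets. -/
def diagFunctor : SimplicialSpace ⥤ SSet :=
  Functor.uncurry ⋙ (Functor.whiskeringLeft SimplexCategoryᵒᵖ (SimplexCategoryᵒᵖ × SimplexCategoryᵒᵖ)
    (Type 0)).obj (Functor.diag SimplexCategoryᵒᵖ)

/-- The functor `δ : sSet → ssSet` sending a simplicial set `K` to the simplicial space which in
simplicial degree `m` is the discrete (constant) simplicial set on the set `K_m`; it satisfies
`δ(Δ^n) = Δ[n]`, the standard simplex viewed as a simplicial discrete space. -/
def deltaFunctor : SSet ⥤ SimplicialSpace :=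
  (Functor.whiskeringRight SimplexCategoryᵒᵖ (Type 0) SSet).obj
    (Functor.const SimplexCategoryᵒᵖ)

/-- A map of simplicial sets is a weak homotopy equivalence iff its geometric realization is a
homotopy equivalence of topological spaces. -/
def IsWeakHomotopyEquiv {X Y : SSet} (f : X ⟶ Y) : Prop :=
  ∃ g : C(SSet.toTop.obj Y, SSet.toTop.obj X),
    ContinuousMap.Homotopic (((SSet.toTop.map f).hom : C(SSet.toTop.obj X, SSet.toTop.obj Y)).comp g)
      (ContinuousMap.id _) ∧
    ContinuousMap.Homotopic (g.comp ((SSet.toTop.map f).hom : C(SSet.toTop.obj X, SSet.toTop.obj Y)))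
      (ContinuousMap.id _)

/-!
Since `d!(Δ^n)_m = Δ^n × Δ([m], [n])`, the column `(d!X)_m` is the colimit of the simplices
`Δ^n` indexed by triples `(n, x ∈ X_n, α : [m] → [n])`, and `η` sends such a simplex to the
point `α^* x` of the discrete simplicial set `X_m`. It has a section picking out the vertex `0`
of the simplex `(m, x, id)`, and the composite "`η`, then the section" collapses the simplex
indexed by `(n, x, α)` onto its vertex `α(0)`. Since these vertices are compatible with the
colimit diagram, the straight-line homotopies to them glue on the geometric realization, so
each `η_m` is a homotopy equivalence after realization.
-/

universe u

lemma isWeakHomotopyEquiv_of_retraction {X Y : SSet} (f : X ⟶ Y) (s : Y ⟶ X)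
    (hsf : s ≫ f = 𝟙 Y)
    (hfs : ContinuousMap.Homotopic (ContinuousMap.id _) (SSet.toTop.map (f ≫ s)).hom) :
    IsWeakHomotopyEquiv f := by
  refine ⟨(SSet.toTop.map s).hom, ?_, ?_⟩
  · rw [← TopCat.hom_comp, ← Functor.map_comp, hsf, CategoryTheory.Functor.map_id, TopCat.hom_id]
  · rw [← TopCat.hom_comp, ← Functor.map_comp]
    exact hfs.symm

namespace stdSimplex

variable {ι κ : Type*} [Fintype ι] [Fintype κ] [DecidableEq κ]

lemma map_eq_vertex_of_forall_eq (f : ι → κ) (k : κ) (hf : ∀ a, f a = k) (s : stdSimplex ℝ ι) :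
    map f s = vertex k := by
  ext j
  rw [map_coe, FunOnFinite.linearMap_apply_apply, vertex_coe]
  by_cases h : k = j
  · subst h
    simp [hf]
  · rw [Finset.filter_false_of_mem (fun a _ => by rw [hf a]; exact h), Finset.sum_empty,
      Pi.single_eq_of_ne (Ne.symm h)]

variable [DecidableEq ι]

def lineToVertex (i : ι) (p : stdSimplex ℝ ι × unitInterval) : stdSimplex ℝ ι :=
  ⟨(1 - (p.2 : ℝ)) • ⇑p.1 + (p.2 : ℝ) • Pi.single i 1,
    convex_stdSimplex ℝ ι p.1.2 (single_mem_stdSimplex ℝ i)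
      (sub_nonneg.2 p.2.2.2) p.2.2.1 (sub_add_cancel _ _)⟩

lemma lineToVertex_coe (i : ι) (p : stdSimplex ℝ ι × unitInterval) :
    ⇑(lineToVertex i p) = (1 - (p.2 : ℝ)) • ⇑p.1 + (p.2 : ℝ) • Pi.single i 1 := rfl

lemma continuous_lineToVertex (i : ι) : Continuous (lineToVertex i) :=
  Continuous.subtype_mk (by fun_prop) _

lemma lineToVertex_zero (i : ι) (s : stdSimplex ℝ ι) : lineToVertex i (s, 0) = s := by
  ext1; simp [lineToVertex_coe]

lemma lineToVertex_one (i : ι) (s : stdSimplex ℝ ι) : lineToVertex i (s, 1) = vertex i := by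
  ext1; simp [lineToVertex_coe]

lemma map_lineToVertex (f : ι → κ) (i : ι) (p : stdSimplex ℝ ι × unitInterval) :
    map f (lineToVertex i p) = lineToVertex (f i) (map f p.1, p.2) := by
  have hv := congrArg (⇑) (map_vertex (S := ℝ) f i)
  simp only [map_coe, vertex_coe] at hv
  ext1
  rw [map_coe, lineToVertex_coe, lineToVertex_coe, map_add, map_smul, map_smul, hv, map_coe]

end stdSimplex

namespace SimplexCategory

def toTopLineToVertex (x : SimplexCategory) (i : Fin (x.len + 1)) :
    C(toTop.{u}.obj x × unitInterval, toTop.{u}.obj x) where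
  toFun p := ULift.up (stdSimplex.lineToVertex i (p.1.down, p.2))
  continuous_toFun := continuous_uliftUp.comp ((stdSimplex.continuous_lineToVertex i).comp
    ((continuous_uliftDown.comp continuous_fst).prodMk continuous_snd))

lemma toTopLineToVertex_zero (x : SimplexCategory) (i : Fin (x.len + 1))
    (t : toTop.{u}.obj x) : toTopLineToVertex x i (t, 0) = t :=
  congrArg ULift.up (stdSimplex.lineToVertex_zero i t.down)

lemma toTopLineToVertex_one (x : SimplexCategory) (i : Fin (x.len + 1))
    (t : toTop.{u}.obj x) : toTopLineToVertex x i (t, 1) = toTop.map (const x x i) t := by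
  refine congrArg ULift.up ((stdSimplex.lineToVertex_one i t.down).trans ?_)
  exact (stdSimplex.map_eq_vertex_of_forall_eq _ i (fun _ => rfl) t.down).symm

lemma toTop_map_toTopLineToVertex {x y : SimplexCategory} (f : x ⟶ y) (i : Fin (x.len + 1))
    (t : toTop.{u}.obj x) (s : unitInterval) :
    toTop.map f (toTopLineToVertex x i (t, s))
      = toTopLineToVertex y (f.toOrderHom i) (toTop.map f t, s) :=
  congrArg ULift.up (stdSimplex.map_lineToVertex _ i (t.down, s))

end SimplexCategory

namespace SSet

variable {J : Type u} [SmallCategory J] {P : J ⥤ SimplexCategory}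

def realizationCocone (c : Cocone (P ⋙ stdSimplex.{u})) : Cocone (P ⋙ SimplexCategory.toTop.{u}) :=
  (Cocone.precompose (Functor.isoWhiskerLeft P toTopSimplex.symm).hom).obj (toTop.mapCocone c)

variable {c : Cocone (P ⋙ stdSimplex.{u})}

def isColimitRealizationCocone (hc : IsColimit c) : IsColimit (realizationCocone c) :=
  (IsColimit.precomposeHomEquiv _ _).symm (isColimitOfPreserves toTop hc)

lemma realizationCocone_ι_app_comp_toTop_map {j : J} {r : c.pt ⟶ c.pt}
    {f : P.obj j ⟶ P.obj j} (hr : c.ι.app j ≫ r = SSet.stdSimplex.map f ≫ c.ι.app j) :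
    (realizationCocone c).ι.app j ≫ toTop.map r
      = SimplexCategory.toTop.map f ≫ (realizationCocone c).ι.app j := by
  have h := congrArg (fun g => toTopSimplex.inv.app (P.obj j) ≫ toTop.map g) hr
  simp only [Functor.map_comp] at h
  calc _ = toTopSimplex.inv.app (P.obj j) ≫ toTop.map (c.ι.app j) ≫ toTop.map r :=
        Category.assoc _ _ _
    _ = _ := h
    _ = _ := (Category.assoc _ _ _).symm
    _ = _ := congrArg (· ≫ toTop.map (c.ι.app j)) (toTopSimplex.{u}.inv.naturality f).symm
    _ = _ := Category.assoc _ _ _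

section

variable (v : ∀ j, Fin ((P.obj j).len + 1)) (hv : ∀ {j j'} (g : j ⟶ j'), v j' = (P.map g).toOrderHom (v j))

-- Gluing into the path space `C(I, |c.pt|)` rather than out of `|c.pt| × I` avoids having to
-- know that `- × I` preserves colimits.
variable (c) in
def contractionCocone : Cocone (P ⋙ SimplexCategory.toTop.{u}) where
  pt := TopCat.of C(unitInterval, toTop.obj c.pt)
  ι :=
    { app := fun j => TopCat.ofHom
        (((realizationCocone c).ι.app j).hom.comp
          (SimplexCategory.toTopLineToVertex (P.obj j) (v j))).curry
      naturality := fun j j' g => by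
        refine ConcreteCategory.hom_ext _ _ fun t => ContinuousMap.ext fun s => ?_
        change (realizationCocone c).ι.app j'
            (SimplexCategory.toTopLineToVertex _ (v j') (SimplexCategory.toTop.map (P.map g) t, s))
          = (realizationCocone c).ι.app j (SimplexCategory.toTopLineToVertex _ (v j) (t, s))
        rw [hv g, ← SimplexCategory.toTop_map_toTopLineToVertex]
        exact ConcreteCategory.congr_hom ((realizationCocone c).w g) _ }

variable (hc : IsColimit c)

def contraction : C(toTop.obj c.pt × unitInterval, toTop.obj c.pt) :=
  ((isColimitRealizationCocone hc).desc (contractionCocone c v hv)).hom.uncurry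

lemma contraction_realizationCocone_ι_app (j : J) (t : SimplexCategory.toTop.obj (P.obj j))
    (s : unitInterval) :
    contraction v hv hc ((realizationCocone c).ι.app j t, s)
      = (realizationCocone c).ι.app j (SimplexCategory.toTopLineToVertex _ (v j) (t, s)) :=
  congrArg (fun γ : C(unitInterval, toTop.obj c.pt) => γ s)
    (ConcreteCategory.congr_hom ((isColimitRealizationCocone hc).fac (contractionCocone c v hv) j) t)

lemma contraction_apply_eq_of_ι_app_comp {s : unitInterval} {g : toTop.obj c.pt ⟶ toTop.obj c.pt}
    (hg : ∀ j, (realizationCocone c).ι.app j ≫ g = TopCat.ofHom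
      (((realizationCocone c).ι.app j).hom.comp
        ((SimplexCategory.toTopLineToVertex _ (v j)).comp ⟨fun t => (t, s), by fun_prop⟩)))
    (y : toTop.obj c.pt) : contraction v hv hc (y, s) = g y := by
  suffices TopCat.ofHom ⟨fun y => contraction v hv hc (y, s), by fun_prop⟩ = g from
    (ConcreteCategory.congr_hom this y)
  refine (isColimitRealizationCocone hc).hom_ext fun j => ?_
  rw [hg]
  ext t
  exact contraction_realizationCocone_ι_app v hv hc j t s

end

theorem homotopic_id_toTop_map_of_collapse {v : ∀ j, Fin ((P.obj j).len + 1)}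
    (hv : ∀ {j j'} (g : j ⟶ j'), v j' = (P.map g).toOrderHom (v j)) (hc : IsColimit c) (r : c.pt ⟶ c.pt)
    (hr : ∀ j, c.ι.app j ≫ r = SSet.stdSimplex.map (SimplexCategory.const _ _ (v j)) ≫ c.ι.app j) :
    ContinuousMap.Homotopic (ContinuousMap.id _) (toTop.map r).hom := by
  refine ⟨{ toContinuousMap := (contraction v hv hc).comp ⟨Prod.swap, continuous_swap⟩
            map_zero_left := contraction_apply_eq_of_ι_app_comp v hv hc (g := 𝟙 _) fun j => ?_
            map_one_left := contraction_apply_eq_of_ι_app_comp v hv hc fun j => ?_ }⟩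
  · ext t
    exact congrArg ((realizationCocone c).ι.app j)
      (SimplexCategory.toTopLineToVertex_zero _ _ t).symm
  · rw [realizationCocone_ι_app_comp_toTop_map (hr j)]
    ext t
    exact congrArg ((realizationCocone c).ι.app j)
      (SimplexCategory.toTopLineToVertex_one _ _ t).symm

end SSet

namespace DShriek

open Opposite

variable (X : SSet.{0}) (m : SimplexCategoryᵒᵖ)

structure Index : Type where
  n : SimplexCategory
  x : X.obj (op n)
  α : m.unop ⟶ n

variable {X m}

structure Index.Hom (c c' : Index X m) : Type where
  f : c.n ⟶ c'.n
  comp_f : c.α ≫ f = c'.α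
  x_eq : c.x = X.map f.op c'.x

instance : Category (Index X m) where
  Hom := Index.Hom
  id c := ⟨𝟙 c.n, by simp, by simp⟩
  comp u v := ⟨u.f ≫ v.f, by rw [← Category.assoc, u.comp_f, v.comp_f],
    by rw [u.x_eq, v.x_eq, op_comp, Functor.map_comp_apply]⟩

variable (X m)

def Index.proj : Index X m ⥤ SimplexCategory where
  obj c := c.n
  map u := u.f

variable {X m}

def Index.vertex (c : Index X m) : Fin (c.n.len + 1) := c.α.toOrderHom 0

lemma Index.vertex_eq_map_vertex {c c' : Index X m} (u : c ⟶ c') :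
    c'.vertex = u.f.toOrderHom c.vertex := by
  rw [Index.vertex, ← u.comp_f]
  rfl

variable (X m)

abbrev Cell (k : SimplexCategoryᵒᵖ) : Type := Σ c : Index X m, (k.unop ⟶ c.n)

def Cell.Rel (k : SimplexCategoryᵒᵖ) (p q : Cell X m k) : Prop :=
  ∃ u : p.1 ⟶ q.1, q.2 = p.2 ≫ u.f

variable {X m}

abbrev mk {k : SimplexCategoryᵒᵖ} (p : Cell X m k) : Quot (Cell.Rel X m k) := Quot.mk _ p

lemma mk_eq_mk {k : SimplexCategoryᵒᵖ} {p q : Cell X m k} (u : p.1 ⟶ q.1)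
    (h : q.2 = p.2 ≫ u.f) : mk p = mk q :=
  Quot.sound ⟨u, h⟩

variable (X m)

def column : SSet.{0} where
  obj k := Quot (Cell.Rel X m k)
  map g := TypeCat.ofHom (Quot.map (fun p => ⟨p.1, g.unop ≫ p.2⟩)
    (fun _ _ ⟨u, hu⟩ => ⟨u, by rw [hu, Category.assoc]⟩))
  map_id k := by
    ext p
    induction p using Quot.ind
    exact congrArg mk (Sigma.ext rfl (heq_of_eq (Category.id_comp _)))
  map_comp g g' := by
    ext p
    induction p using Quot.ind
    exact congrArg mk (Sigma.ext rfl (heq_of_eq (Category.assoc _ _ _)))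

variable {m} in
def columnMap {m' : SimplexCategoryᵒᵖ} (h : m ⟶ m') : column X m ⟶ column X m' where
  app k := TypeCat.ofHom (Quot.map (fun p => ⟨⟨p.1.n, p.1.x, h.unop ≫ p.1.α⟩, p.2⟩)
    (fun _ _ ⟨u, hu⟩ => ⟨⟨u.f, by rw [Category.assoc, u.comp_f], u.x_eq⟩, hu⟩))
  naturality k k' g := by
    ext p
    induction p using Quot.ind
    rfl

def obj : SimplicialSpace where
  obj := column X
  map := columnMap X
  map_id m := by
    ext k p
    induction p using Quot.ind
    exact congrArg mk (Sigma.ext (congrArg (Index.mk _ _) (Category.id_comp _)) HEq.rfl)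
  map_comp h h' := by
    ext k p
    induction p using Quot.ind
    exact congrArg mk (Sigma.ext (congrArg (Index.mk _ _) (Category.assoc _ _ _)) HEq.rfl)

variable {X} in
def map {Y : SSet.{0}} (φ : X ⟶ Y) : obj X ⟶ obj Y where
  app m :=
    { app := fun k => TypeCat.ofHom (Quot.map (fun p => ⟨⟨p.1.n, φ.app _ p.1.x, p.1.α⟩, p.2⟩)
        (fun _ q ⟨u, hu⟩ => ⟨⟨u.f, u.comp_f, by
          rw [u.x_eq]; exact NatTrans.naturality_apply φ u.f.op q.1.x⟩, hu⟩))
      naturality := fun k k' g => by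
        ext p
        induction p using Quot.ind
        rfl }
  naturality m m' h := by
    ext k p
    induction p using Quot.ind
    rfl

end DShriek

def dShriek : SSet.{0} ⥤ SimplicialSpace where
  obj := DShriek.obj
  map := DShriek.map
  map_id X := by
    ext m k p
    induction p using Quot.ind
    rfl
  map_comp φ ψ := by
    ext m k p
    induction p using Quot.ind
    rfl

namespace DShriek

open Opposite

variable (X : SSet.{0})

def unit : X ⟶ diagFunctor.obj (obj X) where
  app n := TypeCat.ofHom fun z => mk ⟨⟨n.unop, z, 𝟙 _⟩, 𝟙 _⟩
  naturality n n' g := by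
    ext z
    exact mk_eq_mk ⟨g.unop, by simp, rfl⟩ (by simp)

variable {X} {W : SimplicialSpace}

def desc (τ : X ⟶ diagFunctor.obj W) : obj X ⟶ W where
  app m :=
    { app := fun k => TypeCat.ofHom <| Quot.lift
        (fun p => (W.obj m).map p.2.op ((W.map p.1.α.op).app _ (τ.app _ p.1.x)))
        (by
          rintro p q ⟨u, hu⟩
          have hx : τ.app _ p.1.x
              = (W.obj _).map u.f.op ((W.map u.f.op).app _ (τ.app _ q.1.x)) := by
            rw [u.x_eq]; exact NatTrans.naturality_apply τ u.f.op q.1.x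
          dsimp only
          rw [hx, hu, ← u.comp_f]
          simp only [NatTrans.naturality_apply, op_comp, Functor.map_comp, comp_apply,
            NatTrans.comp_app]
          rfl)
      naturality := fun k k' g => by
        ext ⟨p⟩
        change (W.obj m).map (g.unop ≫ p.2).op _ = (W.obj m).map g _
        rw [op_comp, Functor.map_comp_apply]
        rfl }
  naturality m m' h := by
    ext k ⟨p⟩
    change (W.obj m').map p.2.op ((W.map (h.unop ≫ p.1.α).op).app _ (τ.app _ p.1.x))
      = (W.map h).app k ((W.obj m).map p.2.op ((W.map p.1.α.op).app _ (τ.app _ p.1.x)))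
    rw [NatTrans.naturality_apply, op_comp, Functor.map_comp]
    rfl

lemma mk_eq_map_unit {m k : SimplexCategoryᵒᵖ} (p : Cell X m k) :
    mk p = ((obj X).obj m).map p.2.op (((obj X).map p.1.α.op).app _ ((unit X).app _ p.1.x)) :=
  congrArg mk (Sigma.ext (congrArg (Index.mk _ _) (Category.comp_id _).symm)
    (heq_of_eq (Category.comp_id _).symm))

lemma desc_unit_comp (σ : obj X ⟶ W) : desc (unit X ≫ diagFunctor.map σ) = σ := by
  ext m k p
  induction p using Quot.ind with | _ p => ?_
  change (W.obj m).map p.2.op ((W.map p.1.α.op).app _ ((σ.app _).app _ ((unit X).app _ p.1.x)))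
    = (σ.app m).app k (mk p)
  rw [mk_eq_map_unit, NatTrans.naturality_apply (σ.app m)]
  exact congrArg ((W.obj m).map p.2.op)
    (ConcreteCategory.congr_hom (NatTrans.congr_app (σ.naturality p.1.α.op) _) _).symm

lemma unit_comp_desc (τ : X ⟶ diagFunctor.obj W) : unit X ≫ diagFunctor.map (desc τ) = τ := by
  ext n z
  change (W.obj n).map (𝟙 n) ((W.map (𝟙 n)).app n (τ.app n z)) = τ.app n z
  simp only [CategoryTheory.Functor.map_id, NatTrans.id_app]
  rfl

end DShriek

def dShriekAdj : dShriek ⊣ diagFunctor :=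
  Adjunction.mkOfHomEquiv
    { homEquiv := fun X W =>
        { toFun := fun σ => DShriek.unit X ≫ diagFunctor.map σ
          invFun := DShriek.desc
          left_inv := DShriek.desc_unit_comp
          right_inv := DShriek.unit_comp_desc }
      homEquiv_naturality_left_symm := by
        intro X X' W φ τ
        ext m k ⟨p⟩
        rfl
      homEquiv_naturality_right := by
        intro X W W' σ g
        rfl }

def dShriekToDelta : dShriek ⟶ deltaFunctor where
  app X :=
    { app := fun m =>
        { app := fun k => TypeCat.ofHom <| Quot.lift (fun p => X.map p.1.α.op p.1.x)
            (fun _ _ ⟨u, _⟩ => by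
              dsimp only
              rw [u.x_eq, ← Functor.map_comp_apply, ← op_comp, u.comp_f])
          naturality := fun k k' g => by
            ext p
            induction p using Quot.ind
            rfl }
      naturality := fun m m' h => by
        ext k ⟨p⟩
        change X.map (h.unop ≫ p.1.α).op p.1.x = X.map h (X.map p.1.α.op p.1.x)
        rw [op_comp, Functor.map_comp_apply]
        rfl }
  naturality X Y φ := by
    ext m k ⟨p⟩
    exact (NatTrans.naturality_apply φ p.1.α.op p.1.x).symm

namespace DShriek

open Opposite

variable (X : SSet.{0}) (m : SimplexCategoryᵒᵖ)

def vertexSection : (deltaFunctor.obj X).obj m ⟶ column X m where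
  app k := TypeCat.ofHom fun x => mk ⟨⟨m.unop, x, 𝟙 _⟩, SimplexCategory.const _ _ 0⟩

lemma vertexSection_comp : vertexSection X m ≫ (dShriekToDelta.app X).app m = 𝟙 _ := by
  ext k x
  change X.map (𝟙 m) x = x
  rw [CategoryTheory.Functor.map_id]
  rfl

def columnCocone : Cocone (Index.proj X m ⋙ SSet.stdSimplex) where
  pt := column X m
  ι :=
    { app := fun c => { app := fun k => TypeCat.ofHom fun β => mk ⟨c, SSet.stdSimplex.objEquiv β⟩ }
      naturality := fun c c' u => by
        ext k β
        exact (mk_eq_mk u rfl).symm }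

def isColimitColumnCocone : IsColimit (columnCocone X m) where
  desc s :=
    { app := fun k => TypeCat.ofHom <| Quot.lift
        (fun p => (s.ι.app p.1).app k (SSet.stdSimplex.objEquiv.symm p.2))
        (fun p q ⟨u, hu⟩ => by
          dsimp only
          rw [hu]
          exact (ConcreteCategory.congr_hom (NatTrans.congr_app (s.w u) k) _).symm)
      naturality := fun k k' g => by
        apply ConcreteCategory.hom_ext (C := Type); intro p
        induction p using Quot.ind with
        | _ p =>
          exact ConcreteCategory.congr_hom ((s.ι.app p.1).naturality g)
            (SSet.stdSimplex.objEquiv.symm p.2) }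
  fac s c := by
    ext k β
    rfl
  uniq s f hf := by
    ext k p
    induction p using Quot.ind with
    | _ p =>
      exact ConcreteCategory.congr_hom (NatTrans.congr_app (hf p.1) k)
        (SSet.stdSimplex.objEquiv.symm p.2)

lemma columnCocone_ι_comp_collapse (c : Index X m) :
    (columnCocone X m).ι.app c ≫ (dShriekToDelta.app X).app m ≫ vertexSection X m
      = SSet.stdSimplex.map (SimplexCategory.const _ _ c.vertex)
        ≫ (columnCocone X m).ι.app c := by
  ext k β
  exact mk_eq_mk ⟨c.α, Category.id_comp _, rfl⟩ (SimplexCategory.Hom.ext _ _ rfl)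

end DShriek

/-- The functor `d! : sSet → ssSet` left adjoint to the diagonal admits a natural transformation
`d! → δ` to the constant-direction functor `δ`, which is a degreewise weak homotopy equivalence
of simplicial spaces on every simplicial set `X`. -/
theorem dShriek_to_delta_degreewise_weakEquiv :
    ∃ (dShriek : SSet ⥤ SimplicialSpace) (_ : dShriek ⊣ diagFunctor)
      (η : dShriek ⟶ deltaFunctor),
      ∀ (X : SSet) (m : SimplexCategoryᵒᵖ),
        IsWeakHomotopyEquiv ((η.app X).app m) := by
  refine ⟨dShriek, dShriekAdj, dShriekToDelta, fun X m => ?_⟩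
  refine isWeakHomotopyEquiv_of_retraction _ (DShriek.vertexSection X m)
    (DShriek.vertexSection_comp X m) ?_
  exact SSet.homotopic_id_toTop_map_of_collapse DShriek.Index.vertex_eq_map_vertex
    (DShriek.isColimitColumnCocone X m) _ (DShriek.columnCocone_ι_comp_collapse X m)

end
end

section
/- Let T be the simplicial cone on the first barycentric subdivision of Δ^{n-1}, i.e., the nerve of the poset of nondegenerate simplices of Δ^{n-1} with an adjoined terminal element v, viewed as a triangulation of Δ^n. Let c ∈ T be the vertex corresponding to the top-dimensional simplex of Δ^{n-1}, and let T' be the full subcomplex of T on all vertices except c. Then T' is a triangulation of the horn Λ^n (the union of all faces of Δ^n except the face opposite the cone point), and the simplicial map T → T' sending c to v and fixing all other vertices is a retraction of the inclusion T' ↪ T. -/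
/-!
A chain of `T` avoiding `c` consists of the cone vertex and of proper faces of the base simplex
nested inside a largest one, which misses some vertex `j`; so the simplex of the chain lies in the
facet `p j = 0`, which belongs to the horn.

Conversely, for a point `(q, t)` of the horn, repeatedly subtracting from `q` its minimum on its
support writes `q = ∑ a_S 1_S` with `a_S ≥ 0` over a chain of nonempty subsets `S` of the support
of `q`. As `1_S` is `#S` times the barycenter of `S`, the point is a convex combination of the
cone point and these barycenters; no `S` is the full face because `q` has a zero coordinate.
-/

open Set Finset

namespace ConeSubdivision

/-- The poset of nondegenerate simplices of the simplex `Δ^n` with vertex set `Fin (n+1)`,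
i.e. nonempty subsets of `Fin (n+1)` ordered by inclusion.  The simplicial cone `T` on the first
barycentric subdivision of `Δ^n` is the nerve of `WithTop P` (with the adjoined terminal element
`⊤` as the cone vertex `v`). -/
def P (n : ℕ) : Type := {s : Finset (Fin (n + 1)) // s.Nonempty}

instance (n : ℕ) : PartialOrder (P n) :=
  Subtype.partialOrder _

/-- The vertex `c` of `T` corresponding to the top-dimensional simplex of `Δ^n`. -/
def cV (n : ℕ) : WithTop (P n) :=
  WithTop.some (⟨Finset.univ, Finset.univ_nonempty⟩ : P n)

/-- The simplicial retraction `T → T'` sending `c` to the cone vertex `v = ⊤` and fixing all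
other vertices. -/
noncomputable def retr (n : ℕ) : WithTop (P n) → WithTop (P n) :=
  fun x => letI := Classical.dec (x = cV n); if x = cV n then ⊤ else x

/-- The realization of the vertices of `T` in the geometric simplex
`Δ^{n+1} ⊂ (Fin (n+1) → ℝ) × ℝ` (base coordinates and cone coordinate): a simplex `s` of `Δ^n`
goes to its barycenter in the base face, and the cone vertex `⊤` goes to the cone point. -/
noncomputable def vertexPt (n : ℕ) : WithTop (P n) → (Fin (n + 1) → ℝ) × ℝ :=
  WithTop.recTopCoe ((0 : Fin (n + 1) → ℝ), (1 : ℝ))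
    (fun s => (fun i => if i ∈ s.1 then ((s.1.card : ℝ))⁻¹ else 0, (0 : ℝ)))

/-- The geometric horn `Λ^{n+1} ⊂ Δ^{n+1}`: the union of all facets of the simplex except the
face opposite the cone point, i.e. the points of the simplex with some base coordinate zero. -/
def hornSet (n : ℕ) : Set ((Fin (n + 1) → ℝ) × ℝ) :=
  {p | (∀ i, 0 ≤ p.1 i) ∧ 0 ≤ p.2 ∧ (∑ i, p.1 i) + p.2 = 1 ∧ ∃ j, p.1 j = 0}

theorem exists_forall_notMem_of_isChain {ι : Type*} [Fintype ι] [DecidableEq ι] [Nonempty ι]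
    {E : Finset (Finset ι)} (hE : IsChain (· ⊆ ·) (E : Set (Finset ι)))
    (hu : (Finset.univ : Finset ι) ∉ E) :
    ∃ j, ∀ S ∈ E, j ∉ S := by
  rcases E.eq_empty_or_nonempty with rfl | hne
  · simp
  have hsup : E.sup' hne id ∈ E := by
    refine Finset.sup'_mem (E : Set (Finset ι)) (fun S hS T hT => ?_) E hne id fun S hS => hS
    rcases eq_or_ne S T with rfl | hST
    · simpa
    rcases hE hS hT hST with h | h
    · simpa [sup_eq_right.mpr h] using hT
    · simpa [sup_eq_left.mpr h] using hS
  obtain ⟨j, hj⟩ : ∃ j, j ∉ E.sup' hne id := by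
    by_contra! h
    exact hu (Finset.eq_univ_iff_forall.mpr h ▸ hsup)
  exact ⟨j, fun S hS hjS => hj ((Finset.le_sup' id hS : S ⊆ _) hjS)⟩

theorem sum_filter_mem_insert_update {ι : Type*} [DecidableEq ι] {C : Finset (Finset ι)}
    {U : Finset ι} (hU : U ∉ C) (a : Finset ι → ℝ) (μ : ℝ) (i : ι) :
    ∑ S ∈ insert U C with i ∈ S, Function.update a U μ S =
      (if i ∈ U then μ else 0) + ∑ S ∈ C with i ∈ S, a S := by
  rw [Finset.sum_filter, Finset.sum_insert hU, Function.update_self, Finset.sum_filter]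
  congr 1
  exact Finset.sum_congr rfl fun S hS => by rw [Function.update_of_ne (ne_of_mem_of_not_mem hS hU)]

theorem exists_chain_sum_eq {ι : Type*} [Fintype ι] [DecidableEq ι] (q : ι → ℝ)
    (hq : ∀ i, 0 ≤ q i) :
    ∃ (C : Finset (Finset ι)) (a : Finset ι → ℝ), IsChain (· ⊆ ·) (C : Set (Finset ι)) ∧
      (∀ S ∈ C, S.Nonempty ∧ (∀ i ∈ S, q i ≠ 0) ∧ 0 ≤ a S) ∧
      ∀ i, ∑ S ∈ C with i ∈ S, a S = q i := by
  induction h : #{i | q i ≠ 0} using Nat.strong_induction_on generalizing q with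
  | _ k ih =>
    set U : Finset ι := {i | q i ≠ 0}
    rcases U.eq_empty_or_nonempty with hU | hU
    · refine ⟨∅, 0, by simp, by simp, fun i => ?_⟩
      have : i ∉ U := by simp [hU]
      simpa [U, eq_comm] using this
    obtain ⟨i₀, hi₀, hmin⟩ := U.exists_min_image q hU
    set q' : ι → ℝ := fun i => if i ∈ U then q i - q i₀ else 0
    have hq' : ∀ i, 0 ≤ q' i := fun i => by
      by_cases hi : i ∈ U <;> simp [q', hi, hmin i]
    have hsupp : ({i | q' i ≠ 0} : Finset ι) ⊆ U.erase i₀ := fun i => by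
      by_cases hi : i ∈ U <;> by_cases hii : i = i₀ <;> simp_all [q']
    obtain ⟨C, a, hC, hCmem, hsum⟩ :=
      ih _ (h ▸ Finset.card_lt_card (hsupp.trans_ssubset (Finset.erase_ssubset hi₀))) q' hq' rfl
    have hCU : ∀ S ∈ C, S ⊆ U.erase i₀ := fun S hS i hi =>
      hsupp (Finset.mem_filter.mpr ⟨Finset.mem_univ _, (hCmem S hS).2.1 i hi⟩)
    have hUC : U ∉ C := fun hU' => by simpa using hCU U hU' hi₀
    refine ⟨insert U C, Function.update a U (q i₀), ?_, ?_, fun i => ?_⟩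
    · rw [Finset.coe_insert]
      exact hC.insert fun S hS _ => Or.inr ((hCU S hS).trans (Finset.erase_subset _ _))
    · intro S hS
      rcases Finset.mem_insert.mp hS with rfl | hS
      · rw [Function.update_self]
        exact ⟨hU, by simp [U], hq i₀⟩
      · rw [Function.update_of_ne (ne_of_mem_of_not_mem hS hUC)]
        refine ⟨(hCmem S hS).1, fun i hi => ?_, (hCmem S hS).2.2⟩
        simpa [U] using Finset.mem_of_mem_erase (hCU S hS hi)
    · rw [sum_filter_mem_insert_update hUC, hsum i]
      by_cases hi : i ∈ U
      · simp [q', hi]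
      · have : q i = 0 := by simpa [U] using hi
        simp [q', hi, this]

theorem sum_sum_filter_mem_eq_sum_mul_card {ι : Type*} [Fintype ι] [DecidableEq ι]
    (C : Finset (Finset ι)) (a : Finset ι → ℝ) :
    ∑ i, ∑ S ∈ C with i ∈ S, a S = ∑ S ∈ C, a S * #S := by
  rw [Finset.sum_comm' (t' := C) (s' := fun S => S) (by simp [and_comm])]
  simp [mul_comm]

def baseFace {n : ℕ} : WithTop (P n) → Finset (Fin (n + 1)) :=
  WithTop.recTopCoe ∅ fun s => s.1

theorem baseFace_eq_univ_iff {n : ℕ} {x : WithTop (P n)} : baseFace x = Finset.univ ↔ x = cV n := by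
  refine ⟨fun h => ?_, fun h => h ▸ rfl⟩
  induction x using WithTop.recTopCoe with
  | top => exact absurd h Finset.univ_nonempty.ne_empty.symm
  | coe s => exact congrArg WithTop.some (Subtype.ext h)

theorem baseFace_subset_or_subset_of_le {n : ℕ} {x y : WithTop (P n)} (h : x ≤ y) :
    baseFace x ⊆ baseFace y ∨ baseFace y ⊆ baseFace x := by
  induction y using WithTop.recTopCoe with
  | top => exact Or.inr (Finset.empty_subset _)
  | coe t =>
    induction x using WithTop.recTopCoe with
    | top => simp at h
    | coe s => exact Or.inl (WithTop.coe_le_coe.mp h : s ≤ t)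

theorem retr_cV (n : ℕ) : retr n (cV n) = ⊤ := by
  simp [retr]

theorem retr_of_ne {n : ℕ} {x : WithTop (P n)} (h : x ≠ cV n) : retr n x = x := by
  simp [retr, h]

theorem eq_top_of_cV_le {n : ℕ} {y : WithTop (P n)} (h : cV n ≤ y) (hy : y ≠ cV n) : y = ⊤ := by
  induction y using WithTop.recTopCoe with
  | top => rfl
  | coe s =>
    refine absurd (baseFace_eq_univ_iff.mp ?_) hy
    exact Finset.univ_subset_iff.mp (WithTop.coe_le_coe.mp h : (⟨Finset.univ, _⟩ : P n) ≤ s)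

theorem retr_monotone (n : ℕ) : Monotone (retr n) := by
  intro x y hxy
  by_cases hy : y = cV n
  · rw [hy, retr_cV]
    exact le_top
  rw [retr_of_ne hy]
  by_cases hx : x = cV n
  · rw [hx, retr_cV, eq_top_of_cV_le (hx ▸ hxy) hy]
  · rwa [retr_of_ne hx]

theorem retr_ne_cV (n : ℕ) (x : WithTop (P n)) : retr n x ≠ cV n := by
  by_cases hx : x = cV n
  · rw [hx, retr_cV]
    exact WithTop.top_ne_coe
  · rwa [retr_of_ne hx]

theorem vertexPt_coe {n : ℕ} (s : P n) :
    vertexPt n s = (fun i => if i ∈ s.1 then ((#s.1 : ℝ))⁻¹ else 0, 0) := rfl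

def face (n : ℕ) (j : Fin (n + 1)) : Set ((Fin (n + 1) → ℝ) × ℝ) :=
  {p | (∀ i, 0 ≤ p.1 i) ∧ 0 ≤ p.2 ∧ (∑ i, p.1 i) + p.2 = 1 ∧ p.1 j = 0}

theorem face_subset_hornSet (n : ℕ) (j : Fin (n + 1)) : face n j ⊆ hornSet n :=
  fun _ ⟨h₁, h₂, h₃, h₄⟩ => ⟨h₁, h₂, h₃, j, h₄⟩

theorem convex_face (n : ℕ) (j : Fin (n + 1)) : Convex ℝ (face n j) := by
  rintro p ⟨hp₁, hp₂, hp₃, hp₄⟩ q ⟨hq₁, hq₂, hq₃, hq₄⟩ a b ha hb hab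
  simp only [face, Set.mem_ofPred_eq, Prod.fst_add, Prod.snd_add, Prod.smul_fst, Prod.smul_snd,
    Pi.add_apply, Pi.smul_apply, smul_eq_mul, Finset.sum_add_distrib, ← Finset.mul_sum, hp₄, hq₄]
  refine ⟨fun i => by have := hp₁ i; have := hq₁ i; positivity, by positivity, ?_, by ring⟩
  linear_combination a * hp₃ + b * hq₃ + hab

theorem vertexPt_mem_face {n : ℕ} {x : WithTop (P n)} {j : Fin (n + 1)} (hj : j ∉ baseFace x) :
    vertexPt n x ∈ face n j := by
  induction x using WithTop.recTopCoe with
  | top => simp [face, vertexPt]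
  | coe s =>
    have hcard : (#s.1 : ℝ) ≠ 0 := by exact_mod_cast s.2.card_pos.ne'
    refine ⟨fun i => ?_, le_rfl, ?_, ?_⟩ <;> simp only [vertexPt_coe]
    · split_ifs <;> positivity
    · rw [Finset.sum_ite_mem, Finset.univ_inter, Finset.sum_const, nsmul_eq_mul,
        mul_inv_cancel₀ hcard, add_zero]
    · exact if_neg hj

theorem exists_forall_notMem_baseFace {n : ℕ} {ch : Finset (WithTop (P n))}
    (hch : IsChain (· ≤ ·) (ch : Set (WithTop (P n)))) (hc : cV n ∉ ch) :
    ∃ j, ∀ x ∈ ch, j ∉ baseFace x := by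
  have hchain : IsChain (· ⊆ ·) (ch.image baseFace : Set (Finset (Fin (n + 1)))) := by
    rw [Finset.coe_image]
    rintro _ ⟨x, hx, rfl⟩ _ ⟨y, hy, rfl⟩ -
    rcases hch.total hx hy with h | h
    · exact baseFace_subset_or_subset_of_le h
    · exact (baseFace_subset_or_subset_of_le h).symm
  have huniv : Finset.univ ∉ ch.image baseFace := by simp [baseFace_eq_univ_iff, hc]
  obtain ⟨j, hj⟩ := exists_forall_notMem_of_isChain hchain huniv
  exact ⟨j, fun x hx => hj _ (Finset.mem_image_of_mem _ hx)⟩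

theorem convexHull_subset_hornSet {n : ℕ} {ch : Finset (WithTop (P n))}
    (hch : IsChain (· ≤ ·) (ch : Set (WithTop (P n)))) (hc : cV n ∉ ch) :
    convexHull ℝ (vertexPt n '' (ch : Set (WithTop (P n)))) ⊆ hornSet n := by
  obtain ⟨j, hj⟩ := exists_forall_notMem_baseFace hch hc
  refine (convexHull_min ?_ (convex_face n j)).trans (face_subset_hornSet n j)
  rintro _ ⟨x, hx, rfl⟩
  exact vertexPt_mem_face (hj x hx)

noncomputable def ofFinset {n : ℕ} (S : Finset (Fin (n + 1))) : WithTop (P n) :=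
  if h : S.Nonempty then WithTop.some (⟨S, h⟩ : P n) else ⊤

theorem baseFace_ofFinset {n : ℕ} (S : Finset (Fin (n + 1))) : baseFace (ofFinset S) = S := by
  unfold ofFinset
  split_ifs with h
  · rfl
  · exact (Finset.not_nonempty_iff_eq_empty.mp h).symm

theorem ofFinset_le_or_le_of_subset {n : ℕ} {S T : Finset (Fin (n + 1))} (h : S ⊆ T) :
    ofFinset S ≤ ofFinset T ∨ ofFinset T ≤ ofFinset S := by
  unfold ofFinset
  by_cases hS : S.Nonempty
  · rw [dif_pos hS, dif_pos (hS.mono h)]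
    exact Or.inl (WithTop.coe_le_coe.mpr h)
  · rw [dif_neg hS]
    exact Or.inr le_top

theorem vertexPt_ofFinset_empty (n : ℕ) : vertexPt n (ofFinset ∅) = (0, 1) := by
  simp [ofFinset, vertexPt]

theorem smul_vertexPt_ofFinset {n : ℕ} {S : Finset (Fin (n + 1))} (hS : S.Nonempty) (c : ℝ) :
    (c * #S) • vertexPt n (ofFinset S) = (fun i => if i ∈ S then c else 0, 0) := by
  have hcard : (#S : ℝ) ≠ 0 := by exact_mod_cast hS.card_pos.ne'
  rw [ofFinset, dif_pos hS]
  change (c * #S) • ((fun i => if i ∈ S then ((#S : ℝ))⁻¹ else 0, 0) : (Fin (n + 1) → ℝ) × ℝ) = _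
  ext i
  · simp only [Prod.smul_fst, Pi.smul_apply, smul_eq_mul]
    split_ifs
    · field_simp
    · exact mul_zero _
  · simp

theorem isChain_image_ofFinset {n : ℕ} {D : Set (Finset (Fin (n + 1)))}
    (hD : IsChain (· ⊆ ·) D) : IsChain (· ≤ ·) (ofFinset '' D) := by
  rintro _ ⟨S, hS, rfl⟩ _ ⟨T, hT, rfl⟩ -
  rcases hD.total hS hT with h | h
  · exact ofFinset_le_or_le_of_subset h
  · exact (ofFinset_le_or_le_of_subset h).symm

theorem mk_mem_convexHull_image_ofFinset {n : ℕ} {C : Finset (Finset (Fin (n + 1)))}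
    {a : Finset (Fin (n + 1)) → ℝ} {q : Fin (n + 1) → ℝ} {t : ℝ}
    (hC : ∀ S ∈ C, S.Nonempty ∧ 0 ≤ a S) (hq : ∀ i, ∑ S ∈ C with i ∈ S, a S = q i)
    (ht : 0 ≤ t) (hsum : ∑ i, q i + t = 1) :
    (q, t) ∈ convexHull ℝ (vertexPt n '' (ofFinset '' ↑(insert ∅ C))) := by
  have hemptyC : ∅ ∉ C := fun h => Finset.not_nonempty_empty (hC ∅ h).1
  -- `ofFinset ∅` is the cone vertex, which carries the weight `t`.
  set w : Finset (Fin (n + 1)) → ℝ := fun S => if S = ∅ then t else a S * #S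
  have hwC : ∀ S ∈ C, w S = a S * #S := fun S hS => if_neg (ne_of_mem_of_not_mem hS hemptyC)
  have hw_nonneg : ∀ S ∈ insert ∅ C, 0 ≤ w S := by
    intro S hS
    rcases Finset.mem_insert.mp hS with rfl | hS
    · simpa [w] using ht
    · rw [hwC S hS]
      exact mul_nonneg (hC S hS).2 (Nat.cast_nonneg _)
  have hw_sum : ∑ S ∈ insert ∅ C, w S = 1 := by
    rw [Finset.sum_insert hemptyC, Finset.sum_congr rfl hwC, ← sum_sum_filter_mem_eq_sum_mul_card]
    simpa [w, hq, add_comm] using hsum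
  have hpt : ∑ S ∈ insert ∅ C, w S • vertexPt n (ofFinset S) = (q, t) := by
    rw [Finset.sum_insert hemptyC, Finset.sum_congr rfl fun S hS => by
      rw [hwC S hS, smul_vertexPt_ofFinset (hC S hS).1], vertexPt_ofFinset_empty]
    ext i
    · simp [Prod.fst_sum, Finset.sum_apply, w, ← Finset.sum_filter, hq]
    · simp [Prod.snd_sum, w]
  rw [← hpt]
  exact (convex_convexHull ℝ _).sum_mem hw_nonneg hw_sum fun S hS =>
    subset_convexHull ℝ _ (mem_image_of_mem _ (mem_image_of_mem _ hS))

theorem hornSet_subset_iUnion (n : ℕ) :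
    hornSet n ⊆ ⋃ (ch : Finset (WithTop (P n))) (_ : IsChain (· ≤ ·) (ch : Set (WithTop (P n))))
        (_ : cV n ∉ ch), convexHull ℝ (vertexPt n '' (ch : Set (WithTop (P n)))) := by
  classical
  rintro ⟨q, t⟩ ⟨hq, ht, hsum, j₀, hj₀⟩
  obtain ⟨C, a, hC, hCmem, hCsum⟩ := exists_chain_sum_eq q hq
  have hD : IsChain (· ⊆ ·) (↑(insert ∅ C) : Set (Finset (Fin (n + 1)))) := by
    rw [Finset.coe_insert]
    exact hC.insert fun S _ _ => Or.inl (Finset.empty_subset S)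
  have hc : cV n ∉ (insert ∅ C).image ofFinset := by
    rw [Finset.mem_image]
    rintro ⟨S, hS, hSc⟩
    have hSu : S = Finset.univ := baseFace_ofFinset S ▸ baseFace_eq_univ_iff.mpr hSc
    rcases Finset.mem_insert.mp hS with rfl | hS
    · exact Finset.univ_nonempty.ne_empty hSu.symm
    · exact (hCmem S hS).2.1 j₀ (hSu ▸ Finset.mem_univ _) hj₀
  simp only [mem_iUnion]
  refine ⟨(insert ∅ C).image ofFinset, ?_, hc, ?_⟩ <;> rw [Finset.coe_image]
  · exact isChain_image_ofFinset hD
  · exact mk_mem_convexHull_image_ofFinset (fun S hS => ⟨(hCmem S hS).1, (hCmem S hS).2.2⟩)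
      hCsum ht hsum

/-- Let `T` be the simplicial cone (with cone vertex `v = ⊤`) on the first barycentric
subdivision of the simplex with vertex set `Fin (n+1)`, let `c` be the vertex corresponding to
the top-dimensional simplex, and let `T'` be the full subcomplex on all vertices except `c`.
Then the simplicial (i.e. monotone) map `T → T'` sending `c` to `v` and fixing all other vertices
is a retraction of the inclusion `T' ↪ T`, and `T'` is a triangulation of the horn `Λ^{n+1}`:
the union of the geometric simplices spanned by the chains of vertices of `T'` is exactly the
horn. -/
theorem cone_subdivision_retraction (n : ℕ) :
    Monotone (retr n) ∧
    retr n (cV n) = ⊤ ∧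
    (∀ x : WithTop (P n), x ≠ cV n → retr n x = x) ∧
    (∀ x : WithTop (P n), retr n x ≠ cV n) ∧
    (⋃ (ch : Finset (WithTop (P n))) (_ : IsChain (· ≤ ·) (ch : Set (WithTop (P n))))
        (_ : cV n ∉ ch), convexHull ℝ (vertexPt n '' (ch : Set (WithTop (P n))))) =
      hornSet n := by
  refine ⟨retr_monotone n, retr_cV n, fun x hx => retr_of_ne hx, retr_ne_cV n, ?_⟩
  refine Subset.antisymm ?_ (hornSet_subset_iUnion n)
  exact iUnion_subset fun ch => iUnion_subset fun hch => iUnion_subset fun hc =>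
    convexHull_subset_hornSet hch hc

end ConeSubdivision
end
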